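/- Let Y_1=e^{W} where W is a standard normal random variable, let δ>0, η>0, and for u>e set n(u)=⌊(1+η)(log u)²/(2·log(1+δ))⌋ and ε(u)=4·log(log u)/log u. Then P(Y_1 > u − n(u)·u^{1−ε(u)}) ~ P(Y_1>u) as u→∞; in particular, P(Y_1 > u − n·u^{1−ε(u)}) ~ P(Y_1>u) uniformly over integers 1≤n≤n(u). -/

import Mathlib

open MeasureTheory ProbabilityTheory Filter Real Set

/-- Survival function of the standard normal distribution: `Ψ x = P(Z > x)` for `Z ~ N(0,1)`. -/
noncomputable def stdGaussianSurvival (x : ℝ) : ℝ :=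
  ((gaussianReal 0 1) (Set.Ioi x)).toReal

/-- `L` is regularly varying at infinity with index `β`. -/
def RegVary (L : ℝ → ℝ) (β : ℝ) : Prop :=
  ∀ l : ℝ, 0 < l → Tendsto (fun u => L (l * u) / L u) atTop (nhds (l ^ β))

/-- Asymptotic equivalence at infinity: `f u / g u → 1` as `u → ∞`. -/
def AsymEquiv (f g : ℝ → ℝ) : Prop :=
  Tendsto (fun u => f u / g u) atTop (nhds 1)

/-!
With `Ψ` the standard normal survival function and `φ` its density, `P(e^W > v) = Ψ(log v)`.
For `0 ≤ a ≤ b` the mean value bound `Ψ a - Ψ b ≤ (b - a) φ a` and the Mills-type lower bound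
`Ψ b ≥ b⁻¹ φ(b + b⁻¹)` give `Ψ a / Ψ b - 1 ≤ b (b - a) e^{b (b - a) + 2}`, so `Ψ a / Ψ b → 1`
as soon as `b (b - a) → 0`. With `b = log u` and `a = log (u - s)` this holds when
`s log u / u → 0`, and for `s = n(u) u / (log u)^4 = O(u / (log u)^2)` it is `O(1 / log u)`.
Uniformity in `n ≤ n(u)` is monotonicity of the tail.
-/

open scoped Topology

local notation "φ" => gaussianPDFReal 0 1
local notation "Ψ" => stdGaussianSurvival

lemma stdGaussianSurvival_eq_integral (x : ℝ) : Ψ x = ∫ t in Ioi x, φ t := by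
  rw [stdGaussianSurvival, gaussianReal_apply_eq_integral 0 one_ne_zero,
    ENNReal.toReal_ofReal (setIntegral_nonneg measurableSet_Ioi
      fun t _ => gaussianPDFReal_nonneg 0 1 t)]

lemma stdGaussianSurvival_antitone : Antitone Ψ := fun _ _ h =>
  ENNReal.toReal_mono (measure_ne_top _ _) (measure_mono (Ioi_subset_Ioi h))

lemma gaussianPDFReal_zero_one_antitoneOn : AntitoneOn φ (Ici 0) := by
  intro x hx y _ hxy
  unfold gaussianPDFReal
  gcongr
  simpa using hx

lemma gaussianPDFReal_zero_one_div (a y : ℝ) : φ a / φ y = exp ((y ^ 2 - a ^ 2) / 2) := by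
  unfold gaussianPDFReal
  rw [mul_div_mul_left _ _ (by positivity), ← exp_sub]
  norm_num
  ring_nf

lemma setIntegral_Ioc_gaussianPDFReal_le {x y : ℝ} (hx : 0 ≤ x) (hxy : x ≤ y) :
    ∫ t in Ioc x y, φ t ≤ (y - x) * φ x := by
  calc ∫ t in Ioc x y, φ t ≤ ∫ _ in Ioc x y, φ x :=
        setIntegral_mono_on (integrable_gaussianPDFReal 0 1).integrableOn
          (integrableOn_const measure_Ioc_lt_top.ne) measurableSet_Ioc
          fun t ht => gaussianPDFReal_zero_one_antitoneOn hx (hx.trans ht.1.le) ht.1.le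
    _ = (y - x) * φ x := by
        rw [setIntegral_const, measureReal_def, volume_Ioc,
          ENNReal.toReal_ofReal (sub_nonneg.2 hxy), smul_eq_mul]

lemma inv_mul_gaussianPDFReal_le_stdGaussianSurvival {x : ℝ} (hx : 0 < x) :
    x⁻¹ * φ (x + x⁻¹) ≤ Ψ x := by
  have hint := (integrable_gaussianPDFReal 0 1).integrableOn (s := Ioc x (x + x⁻¹))
  calc x⁻¹ * φ (x + x⁻¹) = ∫ _ in Ioc x (x + x⁻¹), φ (x + x⁻¹) := by
        rw [setIntegral_const, measureReal_def, volume_Ioc, add_sub_cancel_left,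
          ENNReal.toReal_ofReal (by positivity), smul_eq_mul]
    _ ≤ ∫ t in Ioc x (x + x⁻¹), φ t :=
        setIntegral_mono_on (integrableOn_const measure_Ioc_lt_top.ne) hint measurableSet_Ioc
          fun t ht => gaussianPDFReal_zero_one_antitoneOn (hx.le.trans ht.1.le)
            (by simp only [mem_Ici]; positivity) ht.2
    _ ≤ ∫ t in Ioi x, φ t :=
        setIntegral_mono_set (integrable_gaussianPDFReal 0 1).integrableOn
          (.of_forall fun t => gaussianPDFReal_nonneg 0 1 t) Ioc_subset_Ioi_self.eventuallyLE
    _ = Ψ x := (stdGaussianSurvival_eq_integral x).symm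

lemma stdGaussianSurvival_pos {x : ℝ} (hx : 0 < x) : 0 < Ψ x :=
  (mul_pos (inv_pos.2 hx) (gaussianPDFReal_pos 0 1 _ one_ne_zero)).trans_le
    (inv_mul_gaussianPDFReal_le_stdGaussianSurvival hx)

lemma stdGaussianSurvival_sub_le {x y : ℝ} (hx : 0 ≤ x) (hxy : x ≤ y) :
    Ψ x - Ψ y ≤ (y - x) * φ x := by
  have hsplit : Ψ x = (∫ t in Ioc x y, φ t) + Ψ y := by
    rw [stdGaussianSurvival_eq_integral, stdGaussianSurvival_eq_integral,
      ← setIntegral_union (Ioc_disjoint_Ioi le_rfl) measurableSet_Ioi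
        (integrable_gaussianPDFReal 0 1).integrableOn (integrable_gaussianPDFReal 0 1).integrableOn,
      Ioc_union_Ioi_eq_Ioi hxy]
  linarith [setIntegral_Ioc_gaussianPDFReal_le hx hxy]

lemma stdGaussianSurvival_div_sub_one_le {a b : ℝ} (ha : 0 ≤ a) (hab : a ≤ b) (hb : 1 ≤ b) :
    Ψ a / Ψ b - 1 ≤ b * (b - a) * exp (b * (b - a) + 2) := by
  have hb0 : 0 < b := one_pos.trans_le hb
  have hΨb := stdGaussianSurvival_pos hb0
  have hφ := gaussianPDFReal_pos 0 1 (b + b⁻¹) one_ne_zero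
  have hexponent : ((b + b⁻¹) ^ 2 - a ^ 2) / 2 ≤ b * (b - a) + 2 := by
    have hbinv : b * b⁻¹ = 1 := mul_inv_cancel₀ hb0.ne'
    have hinv_le : b⁻¹ ≤ 1 := inv_le_one_of_one_le₀ hb
    nlinarith [sq_nonneg (b - a), inv_pos.2 hb0]
  calc Ψ a / Ψ b - 1 = (Ψ a - Ψ b) / Ψ b := by field_simp
    _ ≤ (b - a) * φ a / (b⁻¹ * φ (b + b⁻¹)) :=
        div_le_div₀ (mul_nonneg (sub_nonneg.2 hab) (gaussianPDFReal_nonneg 0 1 a))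
          (stdGaussianSurvival_sub_le ha hab) (by positivity)
          (inv_mul_gaussianPDFReal_le_stdGaussianSurvival hb0)
    _ = b * (b - a) * (φ a / φ (b + b⁻¹)) := by field_simp
    _ ≤ b * (b - a) * exp (b * (b - a) + 2) := by
        rw [gaussianPDFReal_zero_one_div]
        gcongr

lemma tendsto_stdGaussianSurvival_div {α : Type*} {l : Filter α} {a b : α → ℝ}
    (ha : ∀ᶠ x in l, 0 ≤ a x) (hab : ∀ᶠ x in l, a x ≤ b x) (hb : Tendsto b l atTop)
    (hd : Tendsto (fun x => b x * (b x - a x)) l (𝓝 0)) :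
    Tendsto (fun x => Ψ (a x) / Ψ (b x)) l (𝓝 1) := by
  have hbound : Tendsto (fun x => b x * (b x - a x) * exp (b x * (b x - a x) + 2)) l (𝓝 0) := by
    simpa using hd.mul ((continuous_exp.tendsto _).comp (hd.add_const 2))
  rw [← tendsto_sub_nhds_zero_iff]
  refine tendsto_of_tendsto_of_tendsto_of_le_of_le' tendsto_const_nhds hbound ?_ ?_
  · filter_upwards [hab, hb.eventually_ge_atTop 1] with x hx hb1
    rw [sub_nonneg, one_le_div (stdGaussianSurvival_pos (one_pos.trans_le hb1))]
    exact stdGaussianSurvival_antitone hx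
  · filter_upwards [ha, hab, hb.eventually_ge_atTop 1] with x ha hab hb1
    exact stdGaussianSurvival_div_sub_one_le ha hab hb1

section LogNormal

variable {Ω : Type*} [MeasurableSpace Ω] {P : Measure Ω} {W : Ω → ℝ}

lemma antitone_toReal_measure_lt (X : Ω → ℝ) [IsFiniteMeasure P] :
    Antitone fun c => (P {ω | c < X ω}).toReal := fun _ _ hcc =>
  ENNReal.toReal_mono (measure_ne_top _ _) (measure_mono fun _ hω => hcc.trans_lt hω)

lemma toReal_measure_lt_exp_eq (hWmeas : Measurable W) (hWlaw : P.map W = gaussianReal 0 1)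
    {v : ℝ} (hv : 0 < v) : (P {ω | v < exp (W ω)}).toReal = Ψ (log v) := by
  have hset : {ω | v < exp (W ω)} = W ⁻¹' Ioi (log v) := by
    ext ω
    exact (log_lt_iff_lt_exp hv).symm
  rw [stdGaussianSurvival, hset, ← hWlaw, Measure.map_apply hWmeas measurableSet_Ioi]

lemma half_le_of_log_mul_sub_div_le {u v : ℝ} (hu : 0 < u) (hvu : v ≤ u) (hlog : 1 ≤ log u)
    (hsmall : log u * (u - v) / u ≤ 1 / 2) : u / 2 ≤ v := by
  have hrel : (u - v) / u ≤ 1 / 2 := by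
    calc (u - v) / u ≤ log u * (u - v) / u := by
          rw [mul_div_assoc]
          exact le_mul_of_one_le_left (div_nonneg (sub_nonneg.2 hvu) hu.le) hlog
      _ ≤ 1 / 2 := hsmall
  rw [div_le_iff₀ hu] at hrel
  linarith

lemma log_mul_log_sub_log_le {u v : ℝ} (hv : u / 2 ≤ v) (hvu : v ≤ u) (hu : 0 < u)
    (hlog : 0 ≤ log u) :
    log u * (log u - log v) ≤ 2 * (log u * (u - v) / u) := by
  have hv0 : 0 < v := by linarith
  have hlog_sub : log u - log v ≤ 2 * ((u - v) / u) := by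
    calc log u - log v = log (u / v) := (log_div hu.ne' hv0.ne').symm
      _ ≤ u / v - 1 := log_le_sub_one_of_pos (by positivity)
      _ = (u - v) / v := by field_simp
      _ ≤ (u - v) / (u / 2) := div_le_div_of_nonneg_left (sub_nonneg.2 hvu) (by positivity) hv
      _ = 2 * ((u - v) / u) := by field_simp
  calc log u * (log u - log v) ≤ log u * (2 * ((u - v) / u)) :=
        mul_le_mul_of_nonneg_left hlog_sub hlog
    _ = 2 * (log u * (u - v) / u) := by ring

lemma tendsto_lognormal_tail_ratio (hWmeas : Measurable W) (hWlaw : P.map W = gaussianReal 0 1)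
    {v : ℝ → ℝ} (hvu : ∀ᶠ u in atTop, v u ≤ u)
    (hv : Tendsto (fun u => log u * (u - v u) / u) atTop (𝓝 0)) :
    AsymEquiv (fun u => (P {ω | v u < exp (W ω)}).toReal)
      (fun u => (P {ω | u < exp (W ω)}).toReal) := by
  have hlog := tendsto_log_atTop.eventually_ge_atTop 1
  have hhalf : ∀ᶠ u in atTop, u / 2 ≤ v u := by
    filter_upwards [eventually_gt_atTop 0, hvu, hlog,
      hv.eventually (eventually_le_nhds one_half_pos)] with u hu hvu hlog hsmall
    exact half_le_of_log_mul_sub_div_le hu hvu hlog hsmall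
  have hd : Tendsto (fun u => log u * (log u - log (v u))) atTop (𝓝 0) := by
    refine tendsto_of_tendsto_of_tendsto_of_le_of_le' tendsto_const_nhds
      (by simpa using hv.const_mul 2) ?_ ?_
    · filter_upwards [eventually_ge_atTop 2, hhalf, hvu, hlog] with u hu hhalf hvu hlog
      exact mul_nonneg (by linarith) (sub_nonneg.2 (log_le_log (by linarith) hvu))
    · filter_upwards [eventually_gt_atTop 0, hhalf, hvu, hlog] with u hu hhalf hvu hlog
      exact log_mul_log_sub_log_le hhalf hvu hu (by linarith)
  have hratio := tendsto_stdGaussianSurvival_div (a := fun u => log (v u))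
    (by filter_upwards [eventually_ge_atTop 2, hhalf] with u hu hhalf
          using log_nonneg (by linarith))
    (by filter_upwards [eventually_ge_atTop 2, hhalf, hvu] with u hu hhalf hvu
          using log_le_log (by linarith) hvu)
    tendsto_log_atTop hd
  refine hratio.congr' ?_
  filter_upwards [eventually_gt_atTop 0, hhalf] with u hu hhalf
  rw [toReal_measure_lt_exp_eq hWmeas hWlaw hu,
    toReal_measure_lt_exp_eq hWmeas hWlaw (by linarith : 0 < v u)]

end LogNormal

lemma rpow_one_sub_four_mul_log_log_div_log {u : ℝ} (hu : 1 < u) :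
    u ^ (1 - 4 * log (log u) / log u) = u / log u ^ 4 := by
  have hu0 : 0 < u := one_pos.trans hu
  have hlog : 0 < log u := log_pos hu
  rw [rpow_def_of_pos hu0, mul_sub, mul_one, mul_div_cancel₀ _ hlog.ne', exp_sub, exp_log hu0,
    mul_comm, exp_mul, exp_log hlog, rpow_ofNat]

lemma tendsto_log_mul_div_self_of_le_sq {n : ℝ → ℝ} {C : ℝ} (hn0 : ∀ᶠ u in atTop, 0 ≤ n u)
    (hn : ∀ᶠ u in atTop, n u ≤ C * log u ^ 2) :
    Tendsto (fun u => log u * (n u * (u / log u ^ 4)) / u) atTop (𝓝 0) := by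
  have hlog := tendsto_log_atTop.eventually_gt_atTop 0
  have heq : ∀ᶠ u in atTop, log u * (n u * (u / log u ^ 4)) / u = n u / log u ^ 3 := by
    filter_upwards [eventually_gt_atTop 0, hlog] with u hu hlog
    field_simp
  refine tendsto_of_tendsto_of_tendsto_of_le_of_le' tendsto_const_nhds
    (tendsto_const_nhds.div_atTop tendsto_log_atTop : Tendsto (fun u => C / log u) _ _) ?_ ?_
  · filter_upwards [heq, hn0, hlog] with u heq hn0 hlog
    rw [heq]
    positivity
  · filter_upwards [heq, hn, hlog] with u heq hn hlog
    rw [heq, div_le_div_iff₀ (by positivity) hlog]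
    nlinarith

lemma abs_div_sub_one_le_of_le {f F g : ℝ} (hg : 0 < g) (hgf : g ≤ f) (hfF : f ≤ F) :
    |f / g - 1| ≤ |F / g - 1| := by
  have h1 : 1 ≤ f / g := (one_le_div hg).2 hgf
  have h2 : f / g ≤ F / g := div_le_div_of_nonneg_right hfF hg.le
  rw [abs_of_nonneg (by linarith), abs_of_nonneg (by linarith)]
  linarith

/-- First part of Lemma 2: shifting a standard log-normal tail by `n(u)·u^{1-ε(u)}`
does not change its asymptotics, uniformly in `1 ≤ n ≤ n(u)`. -/
theorem lognormal_tail_shift_negligible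
    {Ω : Type*} [MeasurableSpace Ω] (P : Measure Ω) [IsProbabilityMeasure P]
    (W : Ω → ℝ) (hWmeas : Measurable W)
    (hWlaw : Measure.map W P = gaussianReal 0 1)
    (δ η : ℝ) (hδ : 0 < δ) (hη : 0 < η)
    (nn : ℝ → ℕ) (hnn : ∀ u, Real.exp 1 < u →
      nn u = ⌊(1 + η) * (log u) ^ 2 / (2 * log (1 + δ))⌋₊)
    (ε : ℝ → ℝ) (hε : ∀ u, Real.exp 1 < u → ε u = 4 * log (log u) / log u) :
    AsymEquiv
      (fun u => (P {ω | u - (nn u : ℝ) * u ^ (1 - ε u) < exp (W ω)}).toReal)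
      (fun u => (P {ω | u < exp (W ω)}).toReal) ∧
    ∀ θ > (0 : ℝ), ∀ᶠ u in atTop, ∀ m : ℕ, 1 ≤ m → m ≤ nn u →
      |(P {ω | u - (m : ℝ) * u ^ (1 - ε u) < exp (W ω)}).toReal /
        (P {ω | u < exp (W ω)}).toReal - 1| < θ := by
  have hlogδ : 0 < log (1 + δ) := log_pos (by linarith)
  have hnn_le : ∀ᶠ u in atTop, (nn u : ℝ) ≤ (1 + η) / (2 * log (1 + δ)) * log u ^ 2 := by
    filter_upwards [eventually_gt_atTop (exp 1)] with u hu
    rw [hnn u hu]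
    exact (Nat.floor_le (by positivity)).trans_eq (by ring)
  have hsmall : Tendsto (fun u => log u * (u - (u - nn u * u ^ (1 - ε u))) / u) atTop (𝓝 0) := by
    refine (tendsto_log_mul_div_self_of_le_sq (.of_forall fun u => Nat.cast_nonneg _)
      hnn_le).congr' ?_
    filter_upwards [eventually_gt_atTop (exp 1)] with u hu
    rw [sub_sub_cancel, hε u hu,
      rpow_one_sub_four_mul_log_log_div_log ((one_lt_exp_iff.2 one_pos).trans hu)]
  have hshift_nonneg : ∀ᶠ u in atTop, 0 ≤ u ^ (1 - ε u) := by
    filter_upwards [eventually_ge_atTop 0] with u hu using rpow_nonneg hu _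
  have hasymp := tendsto_lognormal_tail_ratio hWmeas hWlaw
    (by filter_upwards [hshift_nonneg] with u hs using sub_le_self u (by positivity)) hsmall
  refine ⟨hasymp, fun θ hθ => ?_⟩
  filter_upwards [Metric.tendsto_nhds.mp hasymp θ hθ, eventually_gt_atTop 1, hshift_nonneg]
    with u hu hu1 hs m _ hm
  have htail_pos : 0 < (P {ω | u < exp (W ω)}).toReal := by
    rw [toReal_measure_lt_exp_eq hWmeas hWlaw (one_pos.trans hu1)]
    exact stdGaussianSurvival_pos (log_pos hu1)
  refine (abs_div_sub_one_le_of_le htail_pos ?_ ?_).trans_lt (dist_eq _ 1 ▸ hu)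
  · exact antitone_toReal_measure_lt _ (sub_le_self u (by positivity))
  · exact antitone_toReal_measure_lt _ (by gcongr)
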